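/- arXiv:1708.07500 — 6 statements merged into one kernel-verified Lean document; each statement's English description precedes it below -/
import Mathlib

section
/- (Lemma 2.2, lattice form: the invariant lattice of a minimal symplectic G-conic bundle has rank 2.) Let N ≥ 2, set F = H − E_1 in L_N, and let G be a group acting on L_N by ℤ-module automorphisms such that: (i) g(K) = K and g(F) = F for every g ∈ G; (ii) for every g ∈ G and every j ∈ {2,…,N}, g(E_j) lies in the set {E_k : 2 ≤ k ≤ N} ∪ {F − E_k : 2 ≤ k ≤ N}; and (iii) for every j ∈ {2,…,N} there exists g ∈ G with g(E_j) = F − E_j. Then the fixed submodule {x ∈ L_N : g(x) = x for all g ∈ G} equals ℤ·K + ℤ·F. -/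
/-- The lattice `L_N`: the free `ℤ`-module with basis `H, E_1, …, E_N`
(coordinate `0` is the `H`-coordinate, coordinate `i.succ` is the `E_{i+1}`-coordinate). -/
abbrev L (N : ℕ) := Fin (N + 1) → ℤ

/-- The intersection form on `L_N`: `H·H = 1`, `E_i·E_i = -1`, mixed products `0`. -/
def interForm {N : ℕ} (x y : L N) : ℤ :=
  x 0 * y 0 - ∑ i : Fin N, x i.succ * y i.succ

/-- The line class `H`. -/
def Hc {N : ℕ} : L N := Pi.single 0 1

/-- The exceptional class `E_{j+1}` (so `Ec 0 = E_1`, …, `Ec (N-1) = E_N`). -/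
def Ec {N : ℕ} (j : Fin N) : L N := Pi.single j.succ 1

/-- The canonical class `K = -3H + E_1 + ⋯ + E_N`. -/
def Kc {N : ℕ} : L N := fun i => if i = 0 then -3 else 1

/-- An exceptional class: `e·e = -1` and `K·e = -1`. -/
def Exceptional {N : ℕ} (e : L N) : Prop :=
  interForm e e = -1 ∧ interForm Kc e = -1

/-!
If `g` swaps `E_j` and `F - E_j` (`j ≥ 2`), injectivity forces it to send every other `E_k`
to a class other than `E_j` and `F - E_j`, and all of those have vanishing `E_j`-coordinate.
Together with `g K = K` and `g F = F` this pins the `E_j`-coordinate of `g y` down to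
`-(y_H + y_{E_1} + y_{E_j})`. A fixed class `x` therefore satisfies
`x_H + x_{E_1} + 2 x_{E_j} = 0` for every `j ≥ 2`, so its `E_j`-coordinates (`j ≥ 2`) agree
and `x` is a combination of `K` and `F`.
-/

section Coordinates

variable {N : ℕ}

@[simp] lemma Hc_apply_zero : (Hc : L N) 0 = 1 := by simp [Hc]

@[simp] lemma Hc_apply_succ (i : Fin N) : (Hc : L N) i.succ = 0 := by simp [Hc]

@[simp] lemma Ec_apply_zero (k : Fin N) : (Ec k : L N) 0 = 0 := by simp [Ec]

@[simp] lemma Ec_apply_succ (k i : Fin N) : (Ec k : L N) i.succ = if i = k then 1 else 0 := by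
  simp [Ec, Pi.single_apply]

@[simp] lemma Kc_apply_zero : (Kc : L N) 0 = -3 := by simp [Kc]

@[simp] lemma Kc_apply_succ (i : Fin N) : (Kc : L N) i.succ = 1 := by simp [Kc]

lemma Ec_injective : Function.Injective (Ec : Fin N → L N) := fun a b h => by
  simpa using congrFun h a.succ

lemma Kc_eq_smul_Hc_add_sum_Ec : (Kc : L N) = (-3 : ℤ) • Hc + ∑ k, Ec k := by
  funext i
  cases i using Fin.cases <;> simp [Finset.sum_apply]

end Coordinates

abbrev Fc {N : ℕ} [NeZero N] : L N := Hc - Ec 0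

section Swap

variable {N : ℕ} [NeZero N] {A : L N ≃ₗ[ℤ] L N} {j : Fin N}

lemma apply_Ec_apply_succ_eq_zero_of_swap (hF : A Fc = Fc) (hj : j ≠ 0)
    (hswap : A (Ec j) = Fc - Ec j) {k : Fin N} (hkj : k ≠ j)
    (hk : (∃ m, A (Ec k) = Ec m) ∨ ∃ m, A (Ec k) = Fc - Ec m) :
    A (Ec k) j.succ = 0 := by
  have hswap' : A (Fc - Ec j) = Ec j := by rw [map_sub, hF, hswap, sub_sub_cancel]
  rcases hk with ⟨m, hm⟩ | ⟨m, hm⟩ <;> obtain rfl | hmj := eq_or_ne m j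
  · exact absurd (congrFun (A.injective (hm.trans hswap'.symm)) 0) (by simp)
  · simp [hm, hmj.symm]
  · exact absurd (Ec_injective (A.injective (hm.trans hswap.symm))) hkj
  · simp [hm, hj, hmj.symm]

theorem apply_apply_succ_of_swap (hK : A Kc = Kc) (hF : A Fc = Fc)
    (hE : ∀ k ≠ 0, (∃ m, A (Ec k) = Ec m) ∨ ∃ m, A (Ec k) = Fc - Ec m)
    (hj : j ≠ 0) (hswap : A (Ec j) = Fc - Ec j) (y : L N) :
    A y j.succ = -(y 0 + y (Fin.succ 0) + y j.succ) := by
  have hEk (k : Fin N) (hk0 : k ≠ 0) (hkj : k ≠ j) : A (Ec k) j.succ = 0 :=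
    apply_Ec_apply_succ_eq_zero_of_swap hF hj hswap hkj (hE k hk0)
  have hEj : A (Ec j) j.succ = -1 := by simp [hswap, hj]
  have hHc : A Hc j.succ = A (Ec 0) j.succ := by
    simpa [hj, sub_eq_zero] using congrFun hF j.succ
  have hE0 : A (Ec 0) j.succ = -1 := by
    have hsum : ∑ k, A (Ec k) j.succ = A (Ec 0) j.succ + A (Ec j) j.succ :=
      Fintype.sum_eq_add 0 j hj.symm fun k hk => hEk k hk.1 hk.2
    have := congrFun hK j.succ
    rw [Kc_eq_smul_Hc_add_sum_Ec] at this
    simp only [map_add, map_smul, map_sum, Pi.add_apply, Pi.smul_apply, Finset.sum_apply,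
      hsum, hEj, hHc, smul_eq_mul] at this
    simp at this
    linarith
  have hfun : LinearMap.proj j.succ ∘ₗ A.toLinearMap =
      -(LinearMap.proj (R := ℤ) (φ := fun _ : Fin (N + 1) => ℤ) 0 + LinearMap.proj (Fin.succ 0)
        + LinearMap.proj j.succ) := by
    ext i
    cases i using Fin.cases with
    | zero =>
      change A Hc j.succ = -((Hc : L N) 0 + (Hc : L N) (Fin.succ 0) + Hc j.succ)
      simp [hHc, hE0, -Fin.succ_zero_eq_one']
    | succ k =>
      change A (Ec k) j.succ = -((Ec k : L N) 0 + Ec k (Fin.succ 0) + Ec k j.succ)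
      obtain rfl | hk0 := eq_or_ne k 0
      · simp [hE0, hj, -Fin.succ_zero_eq_one']
      obtain rfl | hkj := eq_or_ne k j
      · simp [hEj, hk0.symm, -Fin.succ_zero_eq_one']
      · simp [hEk k hk0 hkj, hk0.symm, hkj.symm, -Fin.succ_zero_eq_one']
  exact LinearMap.congr_fun hfun y

end Swap

lemma eq_smul_Kc_add_smul_Fc {N : ℕ} [NeZero N] {x : L N} {j₀ : Fin N} (hj₀ : j₀ ≠ 0)
    (hx : ∀ j : Fin N, j ≠ 0 → x 0 + x (Fin.succ 0) + 2 * x j.succ = 0) :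
    x = x j₀.succ • Kc + (x 0 + 3 * x j₀.succ) • Fc := by
  have hx₀ := hx j₀ hj₀
  funext i
  cases i using Fin.cases with
  | zero => simp; ring
  | succ k =>
    obtain rfl | hk := eq_or_ne k 0
    · simp [-Fin.succ_zero_eq_one']; linarith
    · simp [hk]; linarith [hx k hk]

/-- Lemma 2.2 (lattice form): the invariant lattice of a minimal symplectic `G`-conic
bundle has rank 2: if a group `G` acts on `L_N` by `ℤ`-module automorphisms fixing `K`
and `F = H - E_1`, sending each `E_j` (`j ≥ 2`) into `{E_k, F - E_k : k ≥ 2}`, and for each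
`j ≥ 2` some `g ∈ G` sends `E_j` to `F - E_j`, then the fixed submodule is `ℤK + ℤF`. -/
theorem stmt1 {N : ℕ} [NeZero N] (hN : 2 ≤ N)
    {G : Type*} [Group G]
    (ρ : G →* (L N ≃ₗ[ℤ] L N))
    (hK : ∀ g : G, ρ g Kc = Kc)
    (hF : ∀ g : G, ρ g (Hc - Ec 0) = Hc - Ec 0)
    (hE : ∀ (g : G) (j : Fin N), j ≠ 0 →
      (∃ k : Fin N, k ≠ 0 ∧ ρ g (Ec j) = Ec k) ∨
      (∃ k : Fin N, k ≠ 0 ∧ ρ g (Ec j) = (Hc - Ec 0) - Ec k))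
    (hmin : ∀ j : Fin N, j ≠ 0 → ∃ g : G, ρ g (Ec j) = (Hc - Ec 0) - Ec j) :
    {x : L N | ∀ g : G, ρ g x = x} =
      {x : L N | ∃ a b : ℤ, x = a • (Kc : L N) + b • (Hc - Ec 0)} := by
  ext x
  refine ⟨fun hx => ?_, ?_⟩
  · have hcoord : ∀ j : Fin N, j ≠ 0 → x 0 + x (Fin.succ 0) + 2 * x j.succ = 0 := by
      intro j hj
      obtain ⟨g, hg⟩ := hmin j hj
      have := apply_apply_succ_of_swap (hK g) (hF g)
        (fun k hk => (hE g k hk).imp (.imp fun _ => And.right) (.imp fun _ => And.right)) hj hg x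
      rw [hx g] at this
      linarith
    exact ⟨_, _,
      eq_smul_Kc_add_smul_Fc (j₀ := (⟨1, hN⟩ : Fin N)) (Fin.ne_of_val_ne one_ne_zero) hcoord⟩
  · rintro ⟨a, b, rfl⟩ g
    rw [map_add, map_smul, map_smul, hK g, hF g]
end

section
/- (Characteristic-element argument in the proof of Lemma 2.7.) Call an element c ∈ L_2 characteristic if c·x ≡ x·x (mod 2) for every x ∈ L_2. Then H − E_1 − E_2 is characteristic while E_1 and E_2 are not. Consequently, every ℤ-module automorphism g of L_2 that preserves the intersection form (g(x)·g(y) = x·y for all x, y) and maps the set of exceptional classes onto itself satisfies g(H − E_1 − E_2) = H − E_1 − E_2. -/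
/-- An element `c ∈ L_2` is characteristic if `c·x ≡ x·x (mod 2)` for all `x`. -/
def Characteristic (c : L 2) : Prop :=
  ∀ x : L 2, (2 : ℤ) ∣ (interForm c x - interForm x x)

lemma interForm_Hc_Hc {N : ℕ} : interForm (Hc : L N) Hc = 1 := by
  simp [interForm, Hc]

lemma interForm_Ec_Hc {N : ℕ} (j : Fin N) : interForm (Ec j) (Hc : L N) = 0 := by
  simp [interForm, Ec, Hc, Pi.single_apply]

namespace L2

lemma interForm_eq (x y : L 2) : interForm x y = x 0 * y 0 - x 1 * y 1 - x 2 * y 2 := by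
  rw [interForm, Fin.sum_univ_two, sub_add_eq_sub_sub]
  rfl

lemma ext_coords {x y : L 2} (h0 : x 0 = y 0) (h1 : x 1 = y 1) (h2 : x 2 = y 2) : x = y := by
  funext i
  fin_cases i <;> assumption

lemma Hc_sub_Ec_sub_Ec : (Hc - Ec 0 - Ec 1 : L 2) = ![1, -1, -1] := by
  funext i; fin_cases i <;> simp [Hc, Ec]

lemma Ec_zero : (Ec 0 : L 2) = ![0, 1, 0] := by
  funext i; fin_cases i <;> simp [Ec]

lemma Ec_one : (Ec 1 : L 2) = ![0, 0, 1] := by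
  funext i; fin_cases i <;> simp [Ec]

lemma Kc_eq : (Kc : L 2) = ![-3, 1, 1] := by
  funext i; fin_cases i <;> simp [Kc]

lemma exceptional_iff (e : L 2) :
    Exceptional e ↔ e = Ec 0 ∨ e = Ec 1 ∨ e = Hc - Ec 0 - Ec 1 := by
  rw [Hc_sub_Ec_sub_Ec, Ec_zero, Ec_one]
  simp only [Exceptional, interForm_eq, Kc_eq]
  constructor
  · rintro ⟨hself, hK⟩
    simp only [Matrix.cons_val] at hK
    -- `(e₁ + e₂)² ≤ 2 (e₁² + e₂²)` with `e₁ + e₂ = 1 - 3 e₀` gives `(7 e₀ + 1)(e₀ - 1) ≤ 0`.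
    have h0 : 0 ≤ e 0 := by nlinarith [sq_nonneg (e 1 - e 2)]
    have h1 : e 0 ≤ 1 := by nlinarith [sq_nonneg (e 1 - e 2)]
    obtain he0 | he0 : e 0 = 0 ∨ e 0 = 1 := by omega
    · have : e 1 * (e 1 - 1) = 0 := by rw [he0] at hself; nlinarith
      rcases mul_eq_zero.1 this with he1 | he1
      · exact Or.inr (Or.inl (ext_coords (by simpa) (by simpa) (by simp; omega)))
      · exact Or.inl (ext_coords (by simpa) (by simp; omega) (by simp; omega))
    · have : (e 1 + 1) ^ 2 = 0 := by rw [he0] at hself; nlinarith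
      have he1 : e 1 = -1 := by linarith [pow_eq_zero_iff two_ne_zero |>.1 this]
      exact Or.inr (Or.inr (ext_coords (by simpa) (by simpa) (by simp; omega)))
  · rintro (rfl | rfl | rfl) <;> simp

end L2

open L2

lemma characteristic_Hc_sub_Ec_sub_Ec : Characteristic (Hc - Ec 0 - Ec 1) := by
  intro x
  obtain ⟨p, hp⟩ := (Int.even_mul_pred_self (x 0)).two_dvd
  obtain ⟨q, hq⟩ := (Int.even_mul_succ_self (x 1)).two_dvd
  obtain ⟨r, hr⟩ := (Int.even_mul_succ_self (x 2)).two_dvd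
  refine ⟨-p + q + r, ?_⟩
  simp only [interForm_eq, Hc_sub_Ec_sub_Ec, Matrix.cons_val_zero, Matrix.cons_val_one,
    Matrix.cons_val]
  linear_combination -hp + hq + hr

lemma not_characteristic_Ec (j : Fin 2) : ¬ Characteristic (Ec j) := by
  intro h
  have := h Hc
  rw [interForm_Ec_Hc, interForm_Hc_Hc] at this
  norm_num at this

lemma Characteristic.map {c : L 2} (hc : Characteristic c) (g : L 2 ≃ₗ[ℤ] L 2)
    (hg : ∀ x y : L 2, interForm (g x) (g y) = interForm x y) : Characteristic (g c) := by
  intro x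
  obtain ⟨y, rfl⟩ := g.surjective x
  rw [hg, hg]
  exact hc y

/-- Characteristic-element argument in Lemma 2.7: `H - E_1 - E_2` is characteristic in
`L_2` while `E_1` and `E_2` are not; consequently every `ℤ`-module automorphism of `L_2`
preserving the intersection form and mapping the set of exceptional classes onto itself
fixes `H - E_1 - E_2`. -/
theorem stmt6 :
    Characteristic (Hc - Ec 0 - Ec 1) ∧
    ¬ Characteristic (Ec 0) ∧
    ¬ Characteristic (Ec 1) ∧
    (∀ g : L 2 ≃ₗ[ℤ] L 2,
      (∀ x y : L 2, interForm (g x) (g y) = interForm x y) →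
      (⇑g '' {e : L 2 | Exceptional e} = {e : L 2 | Exceptional e}) →
      g (Hc - Ec 0 - Ec 1) = Hc - Ec 0 - Ec 1) := by
  refine ⟨characteristic_Hc_sub_Ec_sub_Ec, not_characteristic_Ec 0, not_characteristic_Ec 1, ?_⟩
  intro g hg hexc
  have hexc_image : Exceptional (g (Hc - Ec 0 - Ec 1)) := by
    exact hexc.subset ⟨_, (exceptional_iff _).2 (Or.inr (Or.inr rfl)), rfl⟩
  have hchar_image := characteristic_Hc_sub_Ec_sub_Ec.map g hg
  rcases (exceptional_iff _).1 hexc_image with h | h | h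
  · exact absurd (h ▸ hchar_image) (not_characteristic_Ec 0)
  · exact absurd (h ▸ hchar_image) (not_characteristic_Ec 1)
  · exact h
end

section
/- (Lemma 3.4: splitting of Γ.) Let Γ be a finite subgroup of T = S¹ × S¹ such that the images ρ_1(Γ) and ρ_2(Γ) have the same order n. Then there exists a cyclic subgroup Γ̃ of Γ of order n such that ρ_1 restricts to an isomorphism from Γ̃ onto ρ_1(Γ), and Γ is the internal direct product of Γ_1 := Γ ∩ ker ρ_1 and Γ̃; that is, Γ_1 ∩ Γ̃ = {1} and every element of Γ is a product of an element of Γ_1 and an element of Γ̃. -/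
/-!
`ρ₁(Γ)` is a finite subgroup of `S¹`, hence cyclic of order `n`; lift a generator to `γ ∈ Γ`.
Since `ρ₂(γ)` lies in a group of order `n`, the order of `γ = (ρ₁ γ, ρ₂ γ)` is the lcm of `n`
and a divisor of `n`, i.e. `n`. So `ρ₁` is injective on `Γ̃ = ⟨γ⟩`, which maps onto `ρ₁(Γ)`;
the splitting `x = (x v⁻¹) v`, with `v ∈ Γ̃` and `ρ₁ v = ρ₁ x`, follows.
-/

open Subgroup

section SplittingAlongHom

variable {G H : Type*} [Group G] [Group H] (f : G →* H)

theorem injOn_zpowers_of_orderOf_map_eq {γ : G} (h : orderOf (f γ) = orderOf γ) :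
    Set.InjOn f (zpowers γ) := by
  refine (Set.injOn_iff_map_eq_one f (zpowers γ)).mpr ?_
  rintro _ ⟨k, rfl⟩ hk
  rw [map_zpow, ← orderOf_dvd_iff_zpow_eq_one, h] at hk
  exact orderOf_dvd_iff_zpow_eq_one.mp hk

theorem inf_ker_inf_eq_bot_of_injOn (Γ : Subgroup G) {K : Subgroup G}
    (hK : Set.InjOn f K) : Γ ⊓ f.ker ⊓ K = ⊥ := by
  refine eq_bot_iff.mpr fun x ⟨⟨_, hx⟩, hxK⟩ => ?_
  exact (Set.injOn_iff_map_eq_one f K).mp hK x hxK hx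

theorem exists_mem_inf_ker_mul_mem_of_map_eq {Γ K : Subgroup G} (hKΓ : K ≤ Γ)
    (hmap : K.map f = Γ.map f) {x : G} (hx : x ∈ Γ) :
    ∃ u ∈ Γ ⊓ f.ker, ∃ v ∈ K, x = u * v := by
  obtain ⟨v, hvK, hv⟩ : f x ∈ K.map f := hmap ▸ mem_map_of_mem f hx
  have hker : x * v⁻¹ ∈ f.ker := by rw [MonoidHom.mem_ker, map_mul, map_inv, hv, mul_inv_cancel]
  exact ⟨x * v⁻¹, ⟨Γ.mul_mem hx (Γ.inv_mem (hKΓ hvK)), hker⟩, v, hvK, by group⟩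

end SplittingAlongHom

theorem zpowers_eq_of_orderOf_eq_natCard {G : Type*} [Group G] {K : Subgroup G} [Finite K]
    {g : G} (hg : g ∈ K) (hord : orderOf g = Nat.card K) : zpowers g = K :=
  eq_of_le_of_card_ge (zpowers_le.mpr hg) (by rw [Nat.card_zpowers, hord])

theorem Prod.orderOf_eq_orderOf_fst_of_dvd {G H : Type*} [Monoid G] [Monoid H] (x : G × H)
    (h : orderOf x.2 ∣ orderOf x.1) : orderOf x = orderOf x.1 := by
  rw [Prod.orderOf, Nat.lcm_eq_left h]

theorem Circle.isCyclic_of_finite (K : Subgroup Circle) [Finite K] : IsCyclic K :=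
  isCyclic_of_injective_ringHom (Circle.coeHom.comp K.subtype)
    (Circle.coe_injective.comp Subtype.coe_injective)

/-- Lemma 3.4 (splitting of `Γ`): if `Γ` is a finite subgroup of `S¹ × S¹` whose images
under the two projections both have order `n`, then there is a cyclic subgroup `Γ̃ ≤ Γ`
of order `n` on which the first projection `ρ₁` restricts to an isomorphism onto
`ρ₁(Γ)`, and `Γ` is the internal direct product of `Γ₁ = Γ ∩ ker ρ₁` and `Γ̃`:
`Γ₁ ∩ Γ̃ = {1}` and every element of `Γ` is a product of an element of `Γ₁` and an
element of `Γ̃`. -/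
theorem stmt10 (Γ : Subgroup (Circle × Circle))
    (hfin : (Γ : Set (Circle × Circle)).Finite) (n : ℕ)
    (h1 : Nat.card ↥(Γ.map (MonoidHom.fst Circle Circle)) = n)
    (h2 : Nat.card ↥(Γ.map (MonoidHom.snd Circle Circle)) = n) :
    ∃ Γt : Subgroup (Circle × Circle),
      Γt ≤ Γ ∧
      IsCyclic ↥Γt ∧
      Nat.card ↥Γt = n ∧
      Γt.map (MonoidHom.fst Circle Circle) = Γ.map (MonoidHom.fst Circle Circle) ∧
      (∀ x ∈ Γt, ∀ y ∈ Γt,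
        MonoidHom.fst Circle Circle x = MonoidHom.fst Circle Circle y → x = y) ∧
      (Γ ⊓ (MonoidHom.fst Circle Circle).ker) ⊓ Γt = ⊥ ∧
      (∀ x ∈ Γ, ∃ u ∈ Γ ⊓ (MonoidHom.fst Circle Circle).ker, ∃ v ∈ Γt, x = u * v) := by
  set ρ₁ := MonoidHom.fst Circle Circle
  have : Finite (Γ.map ρ₁) := (hfin.image ρ₁).to_subtype
  have := Circle.isCyclic_of_finite (Γ.map ρ₁)
  obtain ⟨g, hgen⟩ := IsCyclic.exists_ofOrder_eq_natCard (α := Γ.map ρ₁)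
  obtain ⟨γ, hγΓ, hγg⟩ := g.2
  rw [← Subgroup.orderOf_coe, ← hγg, h1] at hgen
  have hγ₂ : orderOf γ.2 ∣ n := h2 ▸ (Γ.map _).orderOf_dvd_natCard (mem_map_of_mem _ hγΓ)
  have hγ : orderOf γ = n := (γ.orderOf_eq_orderOf_fst_of_dvd (hgen ▸ hγ₂)).trans hgen
  have hinj : Set.InjOn ρ₁ (zpowers γ) := injOn_zpowers_of_orderOf_map_eq ρ₁ (hgen.trans hγ.symm)
  have hle : zpowers γ ≤ Γ := zpowers_le.mpr hγΓ
  have hmap : (zpowers γ).map ρ₁ = Γ.map ρ₁ := by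
    rw [MonoidHom.map_zpowers]
    exact zpowers_eq_of_orderOf_eq_natCard (mem_map_of_mem ρ₁ hγΓ) (hgen.trans h1.symm)
  exact ⟨zpowers γ, hle, inferInstance, by rw [Nat.card_zpowers, hγ], hmap,
    fun _ hx _ hy => hinj hx hy, inf_ker_inf_eq_bot_of_injOn ρ₁ Γ hinj,
    fun _ hx => exists_mem_inf_ker_mul_mem_of_map_eq ρ₁ hle hmap hx⟩
end

section
/- (Arithmetic core of Lemma 4.2: no invariant blow-down class for a minimal symplectic G-conic bundle when N ≥ 5, N ≠ 6.) For all integers N, a, b, m with N ≥ 5, N ≠ 6, a ≤ 0, and m ≥ 1, it is impossible that both a(9 − N) − 2b = −m and a²(9 − N) − 4ab = −m hold. -/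
/-!
Eliminating `b` gives `a² (9 - N) = m (1 - 2a)`. For `a = 0` this says `m = 0`. For `a < 0`,
the odd number `1 - 2a ≥ 3` is coprime to `a`, so it divides `9 - N`, which is positive and at
most `4`; hence `a = -1` and `3 ∣ 9 - N`, which rules out `N = 5`.
-/

namespace Int

theorem sq_mul_eq_mul_one_sub_two_mul {a b k m : ℤ} (h₁ : a * k - 2 * b = -m)
    (h₂ : a ^ 2 * k - 4 * a * b = -m) : a ^ 2 * k = m * (1 - 2 * a) := by
  linear_combination 2 * a * h₁ - h₂

theorem isCoprime_one_sub_two_mul_self (a : ℤ) : IsCoprime (1 - 2 * a) a :=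
  ⟨1, 2, by ring⟩

theorem one_sub_two_mul_dvd_of_sq_mul_eq {a k m : ℤ} (h : a ^ 2 * k = m * (1 - 2 * a)) :
    1 - 2 * a ∣ k :=
  (isCoprime_one_sub_two_mul_self a).pow_right.dvd_of_dvd_mul_left ⟨m, by rw [h, mul_comm]⟩

end Int

/-- Arithmetic core of Lemma 4.2: for integers `N ≥ 5` with `N ≠ 6`, `a ≤ 0`, `m ≥ 1`,
the two equations `a(9 - N) - 2b = -m` and `a²(9 - N) - 4ab = -m` (obtained by pairing
the invariant class `C = aK + bF` with `K` and squaring it) cannot both hold. -/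
theorem stmt11 (N a b m : ℤ) (hN : 5 ≤ N) (hN6 : N ≠ 6) (ha : a ≤ 0) (hm : 1 ≤ m) :
    ¬ (a * (9 - N) - 2 * b = -m ∧ a ^ 2 * (9 - N) - 4 * a * b = -m) := by
  rintro ⟨h₁, h₂⟩
  have key := Int.sq_mul_eq_mul_one_sub_two_mul h₁ h₂
  rcases ha.eq_or_lt with rfl | ha
  · linarith
  have hpos : 0 < 9 - N := by
    have : 0 < a ^ 2 * (9 - N) := key ▸ mul_pos (by omega) (by omega)
    exact pos_of_mul_pos_right this (sq_nonneg a)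
  have hdvd := Int.one_sub_two_mul_dvd_of_sq_mul_eq key
  obtain rfl : a = -1 := by have := Int.le_of_dvd hpos hdvd; omega
  omega
end

section
/- (Lemma 4.4, part (2): at most two fiber classes.) Let N ≥ 1 and suppose F, F′ ∈ L_N satisfy K·F = K·F′ = −2, F·F = F′·F′ = 0, F·F′ ≥ 0, and F′ = −aK + bF for some integers a, b with a ≠ 0. Then b = −1 (so that F + F′ = −aK), a > 0, a(9 − N) = 4, and (a, N) is one of (1, 5), (2, 7), (4, 8); in particular N ∈ {5, 7, 8}. -/
/-!
Write `F' = -aK + bF` and expand every product through `K² = 9 - N`, `K·F = -2`, `F² = 0`.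
Then `K·F' = -2` says `a(9 - N) = 2 - 2b`, so `F'² = 2a(1 + b)`, which vanishes only for
`b = -1`; now `a(9 - N) = 4`, and `F·F' = 2a ≥ 0` makes `a` a positive divisor of `4`.
-/

lemma interForm_comm {N : ℕ} (x y : L N) : interForm x y = interForm y x := by
  simp only [interForm, mul_comm]

lemma interForm_add_left {N : ℕ} (x y z : L N) :
    interForm (x + y) z = interForm x z + interForm y z := by
  simp only [interForm, Pi.add_apply, add_mul, Finset.sum_add_distrib]
  ring

lemma interForm_add_right {N : ℕ} (x y z : L N) :
    interForm x (y + z) = interForm x y + interForm x z := by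
  rw [interForm_comm, interForm_add_left, interForm_comm y, interForm_comm z]

lemma interForm_smul_left {N : ℕ} (c : ℤ) (x y : L N) :
    interForm (c • x) y = c * interForm x y := by
  simp only [interForm, Pi.smul_apply, smul_eq_mul, mul_assoc, ← Finset.mul_sum]
  ring

lemma interForm_smul_right {N : ℕ} (c : ℤ) (x y : L N) :
    interForm x (c • y) = c * interForm x y := by
  rw [interForm_comm, interForm_smul_left, interForm_comm]

lemma interForm_Kc_Kc {N : ℕ} : interForm (Kc : L N) Kc = 9 - N := by
  simp [interForm, Kc, Fin.succ_ne_zero]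

lemma eq_of_mul_nine_sub_eq_four {a : ℤ} {N : ℕ} (ha : 0 < a) (h : a * (9 - (N : ℤ)) = 4) :
    (a = 1 ∧ N = 5) ∨ (a = 2 ∧ N = 7) ∨ (a = 4 ∧ N = 8) := by
  have : a ≤ 4 := Int.le_of_dvd (by norm_num) ⟨_, h.symm⟩
  interval_cases a <;> omega

theorem stmt12_general {N : ℕ} (F F' : L N) (a b : ℤ)
    (hKF : interForm Kc F = -2) (hKF' : interForm Kc F' = -2)
    (hFF : interForm F F = 0) (hF'F' : interForm F' F' = 0)
    (hpos : 0 ≤ interForm F F') (ha : a ≠ 0)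
    (hcomb : F' = (-a) • (Kc : L N) + b • F) :
    b = -1 ∧ F + F' = (-a) • (Kc : L N) ∧ 0 < a ∧ a * (9 - (N : ℤ)) = 4 ∧
      ((a = 1 ∧ N = 5) ∨ (a = 2 ∧ N = 7) ∨ (a = 4 ∧ N = 8)) := by
  subst hcomb
  simp only [interForm_add_left, interForm_add_right, interForm_smul_left, interForm_smul_right,
    interForm_comm F Kc, interForm_Kc_Kc, hKF, hFF] at hKF' hF'F' hpos
  have hb : b = -1 := by
    have : 2 * a * (1 + b) = 0 := by linear_combination hF'F' + a * hKF'
    rcases mul_eq_zero.1 this with h | h <;> omega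
  subst hb
  have hK : a * (9 - (N : ℤ)) = 4 := by linear_combination -hKF'
  have hapos : 0 < a := by omega
  exact ⟨rfl, by module, hapos, hK, eq_of_mul_nine_sub_eq_four hapos hK⟩

/-- Lemma 4.4, part (2): if `F, F'` are fiber classes (`K·F = K·F' = -2`,
`F² = F'² = 0`), `F·F' ≥ 0`, and `F' = -aK + bF` with `a ≠ 0`, then `b = -1`
(so `F + F' = -aK`), `a > 0`, `a(9 - N) = 4`, and `(a, N)` is one of
`(1,5)`, `(2,7)`, `(4,8)`; in particular `N ∈ {5, 7, 8}`. -/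
theorem stmt12 {N : ℕ} (hN : 1 ≤ N) (F F' : L N) (a b : ℤ)
    (hKF : interForm Kc F = -2) (hKF' : interForm Kc F' = -2)
    (hFF : interForm F F = 0) (hF'F' : interForm F' F' = 0)
    (hpos : 0 ≤ interForm F F') (ha : a ≠ 0)
    (hcomb : F' = (-a) • (Kc : L N) + b • F) :
    b = -1 ∧ F + F' = (-a) • (Kc : L N) ∧ 0 < a ∧ a * (9 - (N : ℤ)) = 4 ∧
      ((a = 1 ∧ N = 5) ∨ (a = 2 ∧ N = 7) ∨ (a = 4 ∧ N = 8)) :=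
  stmt12_general F F' a b hKF hKF' hFF hF'F' hpos ha hcomb
end

section
/- (Lattice core of Proposition 4.5: independence of the subgroup Q from the chosen reduced basis.) Let N ≥ 2 and set F = H − E_1 in L_N. Suppose E′_2, …, E′_N ∈ L_N are such that there is a bijection σ of {2,…,N} with E′_j ∈ {E_{σ(j)}, F − E_{σ(j)}} for every j. Then for every ℤ-module automorphism g of L_N with g(F) = F, the following are equivalent: (i) for every j ∈ {2,…,N}, g(E_j) ∈ {E_j, F − E_j}; (ii) for every j ∈ {2,…,N}, g(E′_j) ∈ {E′_j, F − E′_j}. -/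
/-! An additive map `g` fixing `F` sends `F - a` to `F - g a`, so the condition
`g x ∈ {x, F - x}` holds for `x = a` exactly when it holds for `x = F - a`. The two
conditions of the theorem therefore differ only by such swaps and by the relabelling `σ`
of the `E_j`, which fixes the index of `E_1`. -/

section

variable {M G : Type*} [AddCommGroup M] [FunLike G M M] [AddMonoidHomClass G M M]

theorem apply_sub_eq_or_iff {g : G} {F : M} (hF : g F = F) (a : M) :
    (g (F - a) = F - a ∨ g (F - a) = F - (F - a)) ↔ (g a = a ∨ g a = F - a) := by
  rw [map_sub, hF, sub_right_inj, sub_right_inj]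

theorem apply_eq_or_iff_of_eq_or {g : G} {F : M} (hF : g F = F) {a b : M}
    (hab : b = a ∨ b = F - a) :
    (g b = b ∨ g b = F - b) ↔ (g a = a ∨ g a = F - a) := by
  rcases hab with rfl | rfl
  · rfl
  · exact apply_sub_eq_or_iff hF a

end

theorem Equiv.Perm.forall_ne_comp_iff {α : Type*} {σ : Equiv.Perm α} {x : α} (hσ : σ x = x)
    {p : α → Prop} : (∀ j, j ≠ x → p (σ j)) ↔ ∀ j, j ≠ x → p j := by
  rw [σ.symm.forall_congr_left (p := fun j => j ≠ x → p j), Equiv.symm_symm]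
  exact forall_congr' fun j => by rw [σ.injective.ne_iff' hσ]

theorem stmt13_general {N : ℕ} [NeZero N]
    (σ : Equiv.Perm (Fin N)) (hσ : σ 0 = 0)
    (E' : Fin N → L N)
    (hE' : ∀ j : Fin N, j ≠ 0 →
      E' j = Ec (σ j) ∨ E' j = (Hc - Ec 0) - Ec (σ j))
    (g : L N ≃ₗ[ℤ] L N) (hgF : g (Hc - Ec 0) = Hc - Ec 0) :
    (∀ j : Fin N, j ≠ 0 → (g (Ec j) = Ec j ∨ g (Ec j) = (Hc - Ec 0) - Ec j)) ↔
    (∀ j : Fin N, j ≠ 0 → (g (E' j) = E' j ∨ g (E' j) = (Hc - Ec 0) - E' j)) := by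
  rw [← σ.forall_ne_comp_iff hσ]
  exact forall₂_congr fun j hj => (apply_eq_or_iff_of_eq_or hgF (hE' j hj)).symm

/-- Lattice core of Proposition 4.5 (independence of `Q` from the reduced basis):
with `F = H - E_1`, if `E'_2, …, E'_N` satisfy `E'_j ∈ {E_{σ(j)}, F - E_{σ(j)}}` for a
bijection `σ` of `{2,…,N}` (encoded as a permutation of the index set fixing the index
of `E_1`), then for any `ℤ`-module automorphism `g` of `L_N` fixing `F`, `g` sends each
`E_j` into `{E_j, F - E_j}` iff it sends each `E'_j` into `{E'_j, F - E'_j}`. -/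
theorem stmt13 {N : ℕ} [NeZero N] (hN : 2 ≤ N)
    (σ : Equiv.Perm (Fin N)) (hσ : σ 0 = 0)
    (E' : Fin N → L N)
    (hE' : ∀ j : Fin N, j ≠ 0 →
      E' j = Ec (σ j) ∨ E' j = (Hc - Ec 0) - Ec (σ j))
    (g : L N ≃ₗ[ℤ] L N) (hgF : g (Hc - Ec 0) = Hc - Ec 0) :
    (∀ j : Fin N, j ≠ 0 → (g (Ec j) = Ec j ∨ g (Ec j) = (Hc - Ec 0) - Ec j)) ↔
    (∀ j : Fin N, j ≠ 0 → (g (E' j) = E' j ∨ g (E' j) = (Hc - Ec 0) - E' j)) :=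
  stmt13_general σ hσ E' hE' g hgF
end
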